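/- arXiv:2401.07583 — 4 statements merged into one kernel-verified Lean document; each statement's English description precedes it below -/
import Mathlib

section
/- Let a(x), b(x) ∈ F_2[x] and let φ(x) = gcd(a(x), b(x)). For positive integers ℓ, κ and any polynomial p(x) with deg(p(x)·φ(x)) < κℓ, we have deg gcd(p(x)·φ(x), x^{κℓ} - 1) ≥ deg gcd(φ(x), x^ℓ - 1). In particular, the dimension k_m = 2·deg gcd(p(x)a(x), p(x)b(x), x^{κℓ} - 1) of an extended generalized bicycle code is at least the dimension k_1 = 2·deg gcd(a(x), b(x), x^ℓ - 1) of the base code. -/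
open Polynomial

private lemma xpow_sub_one_ne_zero {n : ℕ} (hn : 0 < n) :
    (X ^ n - 1 : Polynomial (ZMod 2)) ≠ 0 := by
  have h : (X ^ n - 1 : Polynomial (ZMod 2)) = X ^ n - C 1 := by
    simp
  rw [h]
  exact X_pow_sub_C_ne_zero hn 1

private lemma xpow_dvd (ℓ κ : ℕ) :
    (X ^ ℓ - 1 : Polynomial (ZMod 2)) ∣ X ^ (κ * ℓ) - 1 := by
  have := sub_dvd_pow_sub_pow (X ^ ℓ : Polynomial (ZMod 2)) 1 κ
  simpa [← pow_mul, mul_comm] using this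

/-- With φ = gcd(a,b) and deg(p·φ) < κℓ, deg gcd(p·φ, x^{κℓ}-1) ≥ deg gcd(φ, x^ℓ-1);
in particular the dimension of the extended GB code is at least that of the base code. -/
theorem stmt_3 (ℓ κ : ℕ) (hℓ : 0 < ℓ) (hκ : 0 < κ)
    (a b p : Polynomial (ZMod 2))
    (hdeg : (p * gcd a b).natDegree < κ * ℓ) :
    (gcd (gcd a b) (X ^ ℓ - 1)).natDegree ≤
        (gcd (p * gcd a b) (X ^ (κ * ℓ) - 1)).natDegree ∧
      2 * (gcd (gcd a b) (X ^ ℓ - 1)).natDegree ≤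
        2 * (gcd (gcd (p * a) (p * b)) (X ^ (κ * ℓ) - 1)).natDegree := by
  have hne : (X ^ (κ * ℓ) - 1 : Polynomial (ZMod 2)) ≠ 0 :=
    xpow_sub_one_ne_zero (Nat.mul_pos hκ hℓ)
  set g := gcd (gcd a b) (X ^ ℓ - 1) with hg
  have hg1 : g ∣ gcd a b := gcd_dvd_left _ _
  have hg2 : g ∣ X ^ (κ * ℓ) - 1 := (gcd_dvd_right _ _).trans (xpow_dvd ℓ κ)
  constructor
  · have hd : g ∣ gcd (p * gcd a b) (X ^ (κ * ℓ) - 1) :=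
      dvd_gcd (hg1.trans (dvd_mul_left _ _)) hg2
    have hgcdne : gcd (p * gcd a b) (X ^ (κ * ℓ) - 1) ≠ 0 := fun h => by
      have := ((gcd_eq_zero_iff _ _).mp h).2
      exact hne this
    exact Polynomial.natDegree_le_of_dvd hd hgcdne
  · have hpab : gcd (p * a) (p * b) = normalize p * gcd a b := gcd_mul_left p a b
    have hd : g ∣ gcd (gcd (p * a) (p * b)) (X ^ (κ * ℓ) - 1) := by
      refine dvd_gcd ?_ hg2
      rw [hpab]
      exact hg1.trans (dvd_mul_left _ _)
    have hgcdne : gcd (gcd (p * a) (p * b)) (X ^ (κ * ℓ) - 1) ≠ 0 := fun h => by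
      have := ((gcd_eq_zero_iff _ _).mp h).2
      exact hne this
    exact Nat.mul_le_mul_left 2 (Polynomial.natDegree_le_of_dvd hd hgcdne)
end

section
/- For the generalized bicycle code with H_X = (A|B) and H_Z = (Bᵀ|Aᵀ) where A, B are circulant ℓ×ℓ matrices over F_2 corresponding to polynomials a(x), b(x) ∈ F_2[x]/(x^ℓ-1), the rank of H_X equals ℓ - deg gcd(a(x), b(x), x^ℓ - 1). -/
/-!
Identify `Fin ℓ → K` with `K[x]/(x^ℓ - 1)` through the basis `1, x, …, x^(ℓ-1)`. The circulant
matrix of `c` then acts as multiplication by the class of `∑ cᵢ xⁱ`, so the column space of `(A|B)`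
becomes the ideal `(a, b)` of `K[x]/(x^ℓ - 1)`. That ideal is generated by
`g = gcd(a, b, x^ℓ - 1)`, a divisor of `x^ℓ - 1`, and it has codimension `deg g` since the
quotient by it is `K[x]/(g)`.
-/

open Polynomial Matrix

theorem Polynomial.monic_X_pow_sub_one {R : Type*} [Ring R] {n : ℕ} (hn : n ≠ 0) :
    (X ^ n - 1 : R[X]).Monic := by
  simpa using monic_X_pow_sub_C (1 : R) hn

theorem Polynomial.natDegree_X_pow_sub_one {R : Type*} [Ring R] [Nontrivial R] {n : ℕ} :
    (X ^ n - 1 : R[X]).natDegree = n := by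
  simpa using natDegree_X_pow_sub_C (n := n) (r := (1 : R))

theorem Matrix.range_mulVecLin_fromCols {R m n₁ n₂ : Type*} [CommSemiring R] [Fintype n₁]
    [Fintype n₂] (A : Matrix m n₁ R) (B : Matrix m n₂ R) :
    LinearMap.range (fromCols A B).mulVecLin
      = LinearMap.range A.mulVecLin ⊔ LinearMap.range B.mulVecLin := by
  have hsplit : (fromCols A B).mulVecLin = A.mulVecLin.coprod B.mulVecLin ∘ₗ
      (LinearEquiv.sumArrowLequivProdArrow n₁ n₂ R R).toLinearMap := by
    ext
    simp [LinearEquiv.sumArrowLequivProdArrow, Equiv.sumArrowEquivProdArrow]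
  rw [hsplit, LinearMap.range_comp_of_range_eq_top _ (LinearEquiv.range _),
    LinearMap.range_coprod]

namespace AdjoinRoot

section Cyclic

variable {R : Type*} [CommRing R]

theorem root_pow_mul_root_pow {ℓ : ℕ} (i j : Fin ℓ) :
    root (X ^ ℓ - 1 : R[X]) ^ (i : ℕ) * root (X ^ ℓ - 1 : R[X]) ^ (j : ℕ)
      = root (X ^ ℓ - 1 : R[X]) ^ ((i + j : Fin ℓ) : ℕ) := by
  have hroot : root (X ^ ℓ - 1 : R[X]) ^ ℓ = 1 := by
    have h := mk_self (f := (X ^ ℓ - 1 : R[X]))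
    rwa [map_sub, map_pow, mk_X, map_one, sub_eq_zero] at h
  rw [← pow_add, pow_eq_pow_mod _ hroot, Fin.val_add]

variable [Nontrivial R] {ℓ : ℕ} [NeZero ℓ]

variable (R ℓ) in
noncomputable def cyclicEquiv : (Fin ℓ → R) ≃ₗ[R] AdjoinRoot (X ^ ℓ - 1 : R[X]) :=
  ((powerBasis' (monic_X_pow_sub_one (NeZero.ne ℓ))).basis.reindex
    (finCongr natDegree_X_pow_sub_one)).equivFun.symm

theorem cyclicEquiv_apply (v : Fin ℓ → R) :
    cyclicEquiv R ℓ v = ∑ i, v i • root (X ^ ℓ - 1 : R[X]) ^ (i : ℕ) := by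
  simp only [cyclicEquiv, Module.Basis.equivFun_symm_apply, Module.Basis.coe_reindex,
    PowerBasis.coe_basis, powerBasis'_gen, Function.comp_apply]
  rfl

theorem cyclicEquiv_coeff {p : R[X]} (hp : p.natDegree < ℓ) :
    cyclicEquiv R ℓ (fun i => p.coeff i) = mk (X ^ ℓ - 1) p := by
  rw [cyclicEquiv_apply, ← aeval_eq, aeval_eq_sum_range' hp,
    Fin.sum_univ_eq_sum_range (fun i => p.coeff i • root (X ^ ℓ - 1 : R[X]) ^ i)]

theorem cyclicEquiv_circulant_mulVec (c v : Fin ℓ → R) :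
    cyclicEquiv R ℓ (circulant c *ᵥ v) = cyclicEquiv R ℓ c * cyclicEquiv R ℓ v := by
  simp only [cyclicEquiv_apply, Finset.sum_mul, Finset.mul_sum, smul_mul_smul_comm,
    root_pow_mul_root_pow, mulVec, dotProduct, circulant_apply, Finset.sum_smul]
  rw [Finset.sum_comm]
  exact Finset.sum_congr rfl fun j _ =>
    Fintype.sum_equiv (Equiv.subRight j) _ _ fun i => by simp

theorem map_range_circulant_mulVecLin (c : Fin ℓ → R) :
    (LinearMap.range (circulant c).mulVecLin).map (cyclicEquiv R ℓ).toLinearMap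
      = (Ideal.span {cyclicEquiv R ℓ c}).restrictScalars R := by
  ext z
  simp only [Submodule.mem_map, LinearMap.mem_range, Submodule.restrictScalars_mem,
    Ideal.mem_span_singleton', mulVecLin_apply, LinearEquiv.coe_coe]
  constructor
  · rintro ⟨_, ⟨v, rfl⟩, rfl⟩
    exact ⟨cyclicEquiv R ℓ v, by rw [cyclicEquiv_circulant_mulVec, mul_comm]⟩
  · rintro ⟨u, rfl⟩
    refine ⟨_, ⟨(cyclicEquiv R ℓ).symm u, rfl⟩, ?_⟩
    rw [cyclicEquiv_circulant_mulVec, LinearEquiv.apply_symm_apply, mul_comm]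

end Cyclic

section Field

variable {K : Type*} [Field K]

theorem span_mk_pair [DecidableEq K] (f a b : K[X]) :
    Ideal.span {mk f a, mk f b} = Ideal.span {mk f (gcd (gcd a b) f)} := by
  have hf : (Ideal.span {f}).map (mk f) = ⊥ := by
    rw [Ideal.map_span, Set.image_singleton, mk_self, Ideal.span_singleton_eq_bot]
  calc Ideal.span {mk f a, mk f b}
      = (Ideal.span {a, b}).map (mk f) := by rw [Ideal.map_span, Set.image_pair]
    _ = (Ideal.span {gcd a b} ⊔ Ideal.span {f}).map (mk f) := by
      rw [Ideal.map_sup, hf, sup_bot_eq, span_gcd]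
    _ = Ideal.span {mk f (gcd (gcd a b) f)} := by
      rw [← Ideal.span_insert, ← span_gcd, Ideal.map_span, Set.image_singleton]

theorem finrank_span_mk_of_dvd {f g : K[X]} (hf : f ≠ 0) (hg : g ∣ f) :
    Module.finrank K ((Ideal.span {mk f g}).restrictScalars K) = f.natDegree - g.natDegree := by
  have hquot : Module.finrank K (AdjoinRoot f ⧸ (Ideal.span {mk f g}).restrictScalars K)
      = g.natDegree := by
    have e := (DoubleQuot.quotQuotEquivQuotOfLEₐ K
      (Ideal.span_singleton_le_span_singleton.mpr hg)).toLinearEquiv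
    rw [Ideal.map_span, Set.image_singleton] at e
    rw [← finrank_quotient_span_eq_natDegree, ← e.finrank_eq]
    exact (Submodule.Quotient.restrictScalarsEquiv K _).finrank_eq
  have := (powerBasis hf).finite
  have hsum := Submodule.finrank_quotient_add_finrank ((Ideal.span {mk f g}).restrictScalars K)
  rw [(powerBasis hf).finrank, powerBasis_dim] at hsum
  omega

end Field

end AdjoinRoot

theorem stmt_8_general (ℓ : ℕ) (a b : Polynomial (ZMod 2))
    (ha : a.natDegree < ℓ) (hb : b.natDegree < ℓ) :
    (Matrix.fromCols
        (Matrix.circulant fun i : Fin ℓ => a.coeff i.val)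
        (Matrix.circulant fun i : Fin ℓ => b.coeff i.val)).rank =
      ℓ - (gcd (gcd a b) (X ^ ℓ - 1)).natDegree := by
  have : NeZero ℓ := ⟨(Nat.zero_lt_of_lt ha).ne'⟩
  rw [Matrix.rank, range_mulVecLin_fromCols,
    ← (AdjoinRoot.cyclicEquiv (ZMod 2) ℓ).finrank_map_eq, Submodule.map_sup,
    AdjoinRoot.map_range_circulant_mulVecLin, AdjoinRoot.map_range_circulant_mulVecLin,
    AdjoinRoot.cyclicEquiv_coeff ha, AdjoinRoot.cyclicEquiv_coeff hb,
    ← Submodule.restrictScalars_sup, ← Ideal.span_insert, AdjoinRoot.span_mk_pair,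
    AdjoinRoot.finrank_span_mk_of_dvd (monic_X_pow_sub_one (NeZero.ne ℓ)).ne_zero
      (gcd_dvd_right _ _),
    natDegree_X_pow_sub_one]

/-- For a GB code with H_X = (A|B), A, B circulant from a(x), b(x),
rank H_X = ℓ - deg gcd(a, b, x^ℓ - 1). -/
theorem stmt_8 (ℓ : ℕ) (hℓ : 0 < ℓ) (a b : Polynomial (ZMod 2))
    (ha : a.natDegree < ℓ) (hb : b.natDegree < ℓ) :
    (Matrix.fromCols
        (Matrix.circulant fun i : Fin ℓ => a.coeff i.val)
        (Matrix.circulant fun i : Fin ℓ => b.coeff i.val)).rank =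
      ℓ - (gcd (gcd a b) (X ^ ℓ - 1)).natDegree :=
  stmt_8_general ℓ a b ha hb
end

section
/- Let ℓ_m = 3^{m-1}ℓ and a^{(m)}(x) = p^{(m)}(x)·a(x), b^{(m)}(x) = p^{(m)}(x)·b(x) with p^{(m)} as the product ∏_{k=1}^{m-1}(1 + x^{3^{k-1}ℓ}). Then gcd(a^{(m+1)}, b^{(m+1)}) = (1 + x^{3^{m-1}ℓ})·gcd(a^{(m)}, b^{(m)}), and consequently k_{m+1} := 2·deg gcd(a^{(m+1)}, b^{(m+1)}, x^{ℓ_{m+1}} - 1) ≥ k_m := 2·deg gcd(a^{(m)}, b^{(m)}, x^{ℓ_m} - 1). -/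
open Polynomial

/-- With ℓ_m = 3^{m-1}ℓ, p^{(m)} = ∏_{k=1}^{m-1}(1 + x^{3^{k-1}ℓ}), a^{(m)} = p^{(m)}a,
b^{(m)} = p^{(m)}b: gcd(a^{(m+1)}, b^{(m+1)}) = (1 + x^{3^{m-1}ℓ})·gcd(a^{(m)}, b^{(m)}),
and consequently k_{m+1} ≥ k_m. -/
theorem stmt_13 (ℓ m : ℕ) (hℓ : 0 < ℓ) (hm : 1 ≤ m)
    (a b : Polynomial (ZMod 2)) (ha : a.natDegree < ℓ) (hb : b.natDegree < ℓ) :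
    let p : ℕ → Polynomial (ZMod 2) :=
      fun m => ∏ k ∈ Finset.range (m - 1), (1 + X ^ (3 ^ k * ℓ))
    gcd (p (m + 1) * a) (p (m + 1) * b) =
        (1 + X ^ (3 ^ (m - 1) * ℓ)) * gcd (p m * a) (p m * b) ∧
      2 * (gcd (gcd (p m * a) (p m * b)) (X ^ (3 ^ (m - 1) * ℓ) - 1)).natDegree ≤
        2 * (gcd (gcd (p (m + 1) * a) (p (m + 1) * b)) (X ^ (3 ^ m * ℓ) - 1)).natDegree := by
  intro p
  obtain ⟨m', rfl⟩ : ∃ m', m = m' + 1 := ⟨m - 1, (Nat.succ_pred_eq_of_pos hm).symm⟩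
  set L := 3 ^ (m' + 1 - 1) * ℓ with hL
  have hL' : L = 3 ^ m' * ℓ := by simp [hL]
  have hLpos : 0 < L := by positivity
  have hmonic : (1 + X ^ L : Polynomial (ZMod 2)).Monic := by
    have := monic_X_pow_add (p := (1 : Polynomial (ZMod 2))) (n := L)
      (by simpa using hLpos)
    simpa [add_comm] using this
  have hp : p (m' + 1 + 1) = (1 + X ^ L) * p (m' + 1) := by
    simp only [p, Nat.add_sub_cancel, hL']
    rw [Finset.prod_range_succ, mul_comm]
  have key : gcd (p (m' + 1 + 1) * a) (p (m' + 1 + 1) * b) =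
      (1 + X ^ L) * gcd (p (m' + 1) * a) (p (m' + 1) * b) := by
    rw [hp, mul_assoc, mul_assoc, gcd_mul_left, hmonic.normalize_eq_self]
  refine ⟨key, ?_⟩
  have hdvd1 : X ^ L - 1 ∣ X ^ (3 ^ (m' + 1) * ℓ) - (1 : Polynomial (ZMod 2)) := by
    refine ⟨(X ^ L) ^ 2 + X ^ L + 1, ?_⟩
    have h3 : 3 ^ (m' + 1) * ℓ = L * 3 := by rw [hL']; ring
    rw [h3, pow_mul]; ring
  have hgne : gcd (gcd (p (m' + 1 + 1) * a) (p (m' + 1 + 1) * b))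
      (X ^ (3 ^ (m' + 1) * ℓ) - 1) ≠ 0 := by
    intro h
    have h2 := ((gcd_eq_zero_iff _ _).mp h).2
    have : (X ^ (3 ^ (m' + 1) * ℓ) - C 1 : Polynomial (ZMod 2)) ≠ 0 :=
      X_pow_sub_C_ne_zero (by positivity) 1
    simp only [map_one] at this
    exact this h2
  have hdvd : gcd (gcd (p (m' + 1) * a) (p (m' + 1) * b)) (X ^ L - 1) ∣
      gcd (gcd (p (m' + 1 + 1) * a) (p (m' + 1 + 1) * b)) (X ^ (3 ^ (m' + 1) * ℓ) - 1) := by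
    refine dvd_gcd ?_ (dvd_trans (gcd_dvd_right _ _) hdvd1)
    rw [key]
    exact Dvd.dvd.mul_left (gcd_dvd_left _ _) _
  exact Nat.mul_le_mul_left 2 (natDegree_le_of_dvd hdvd hgne)
end

section
/- Let A be an ℓ×ℓ circulant matrix over F_2 with first column given by the coefficients of a(x), and let A' be the (3ℓ)×(3ℓ) circulant matrix with first column the coefficients of a(x) + x^ℓ·a(x). Then A' has the block form [[L, U, A],[A, L, U],[U, A, L]], where L = L(A) is the lower triangular part of A (entries on or below the diagonal) and U = U(A) is the strictly upper triangular part, so that A = L + U. -/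
open Polynomial

/-- The lower triangular part L(A): entries on or below the diagonal. -/
def lowerTri {ℓ : ℕ} (A : Matrix (Fin ℓ) (Fin ℓ) (ZMod 2)) : Matrix (Fin ℓ) (Fin ℓ) (ZMod 2) :=
  fun i j => if j ≤ i then A i j else 0

/-- The strictly upper triangular part U(A): entries strictly above the diagonal. -/
def upperTri {ℓ : ℕ} (A : Matrix (Fin ℓ) (Fin ℓ) (ZMod 2)) : Matrix (Fin ℓ) (Fin ℓ) (ZMod 2) :=
  fun i j => if i < j then A i j else 0

lemma mod2_aux (t n : ℕ) (h : t < 2 * n) :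
    (t < n ∧ t % n = t) ∨ (n ≤ t ∧ t % n = t - n) := by
  rcases lt_or_ge t n with h1 | h1
  · exact Or.inl ⟨h1, Nat.mod_eq_of_lt h1⟩
  · refine Or.inr ⟨h1, ?_⟩
    rw [Nat.mod_eq_sub_mod h1, Nat.mod_eq_of_lt (by omega)]

lemma core_aux (ℓ I J x y : ℕ) (hℓ : 0 < ℓ) (hI : I < 3) (hJ : J < 3)
    (hx : x < ℓ) (hy : y < ℓ) :
    (J = I → y ≤ x → (3 * ℓ - (J * ℓ + y) + (I * ℓ + x)) % (3 * ℓ) < ℓ ∧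
        (3 * ℓ - (J * ℓ + y) + (I * ℓ + x)) % (3 * ℓ) = (ℓ - y + x) % ℓ) ∧
    (J = I → x < y → 2 * ℓ ≤ (3 * ℓ - (J * ℓ + y) + (I * ℓ + x)) % (3 * ℓ)) ∧
    (J ≠ I → J = (I + 1) % 3 → x < y →
        ℓ ≤ (3 * ℓ - (J * ℓ + y) + (I * ℓ + x)) % (3 * ℓ) ∧
        (3 * ℓ - (J * ℓ + y) + (I * ℓ + x)) % (3 * ℓ) < 2 * ℓ ∧
        (3 * ℓ - (J * ℓ + y) + (I * ℓ + x)) % (3 * ℓ) - ℓ = (ℓ - y + x) % ℓ) ∧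
    (J ≠ I → J = (I + 1) % 3 → y ≤ x →
        2 * ℓ ≤ (3 * ℓ - (J * ℓ + y) + (I * ℓ + x)) % (3 * ℓ)) ∧
    (J ≠ I → J ≠ (I + 1) % 3 → y ≤ x →
        ℓ ≤ (3 * ℓ - (J * ℓ + y) + (I * ℓ + x)) % (3 * ℓ) ∧
        (3 * ℓ - (J * ℓ + y) + (I * ℓ + x)) % (3 * ℓ) < 2 * ℓ ∧
        (3 * ℓ - (J * ℓ + y) + (I * ℓ + x)) % (3 * ℓ) - ℓ = (ℓ - y + x) % ℓ) ∧
    (J ≠ I → J ≠ (I + 1) % 3 → x < y →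
        (3 * ℓ - (J * ℓ + y) + (I * ℓ + x)) % (3 * ℓ) < ℓ ∧
        (3 * ℓ - (J * ℓ + y) + (I * ℓ + x)) % (3 * ℓ) = (ℓ - y + x) % ℓ) := by
  have hIl : I * ℓ ≤ 2 * ℓ := Nat.mul_le_mul_right ℓ (by omega)
  have hJl : J * ℓ ≤ 2 * ℓ := Nat.mul_le_mul_right ℓ (by omega)
  have h1 := mod2_aux (3 * ℓ - (J * ℓ + y) + (I * ℓ + x)) (3 * ℓ) (by omega)
  have h2 := mod2_aux (ℓ - y + x) ℓ (by omega)
  refine ⟨fun hA hB => ?_, fun hA hB => ?_, fun hA hA' hB => ?_, fun hA hA' hB => ?_,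
    fun hA hA' hB => ?_, fun hA hA' hB => ?_⟩
  · subst hA; omega
  · subst hA; omega
  · have hr : J * ℓ = I * ℓ + ℓ ∨ I * ℓ = J * ℓ + 2 * ℓ := by
      interval_cases I <;> interval_cases J <;> omega
    omega
  · have hr : J * ℓ = I * ℓ + ℓ ∨ I * ℓ = J * ℓ + 2 * ℓ := by
      interval_cases I <;> interval_cases J <;> omega
    omega
  · have hr : I * ℓ = J * ℓ + ℓ ∨ J * ℓ = I * ℓ + 2 * ℓ := by
      interval_cases I <;> interval_cases J <;> omega
    omega
  · have hr : I * ℓ = J * ℓ + ℓ ∨ J * ℓ = I * ℓ + 2 * ℓ := by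
      interval_cases I <;> interval_cases J <;> omega
    omega

/-- If A is the ℓ×ℓ circulant with first column the coefficients of a(x) and A' is the
3ℓ×3ℓ circulant with first column the coefficients of a(x) + x^ℓ a(x), then A' has the
block form [[L, U, A], [A, L, U], [U, A, L]] with L = L(A), U = U(A). -/
theorem stmt_15 (ℓ : ℕ) (hℓ : 0 < ℓ) (a : Polynomial (ZMod 2)) (ha : a.natDegree < ℓ) :
    ∀ (i j : Fin 3) (x y : Fin ℓ),
      Matrix.circulant (fun t : Fin (3 * ℓ) => (a + X ^ ℓ * a).coeff t.val)
          ⟨i.val * ℓ + x.val, by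
            have hi := i.isLt; have hx := x.isLt; nlinarith⟩
          ⟨j.val * ℓ + y.val, by
            have hj := j.isLt; have hy := y.isLt; nlinarith⟩ =
        (if j = i then lowerTri (Matrix.circulant fun t : Fin ℓ => a.coeff t.val)
          else if j = i + 1 then upperTri (Matrix.circulant fun t : Fin ℓ => a.coeff t.val)
          else Matrix.circulant fun t : Fin ℓ => a.coeff t.val) x y := by
  intro i j x y
  have hx := x.isLt
  have hy := y.isLt
  have hi := i.isLt
  have hj := j.isLt
  have key : ∀ d : ℕ, (a + X ^ ℓ * a).coeff d =
      if d < ℓ then a.coeff d else if d < 2 * ℓ then a.coeff (d - ℓ) else 0 := by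
    intro d
    rw [coeff_add, mul_comm, coeff_mul_X_pow']
    rcases lt_or_ge d ℓ with h | h
    · rw [if_neg (by omega), if_pos h, add_zero]
    · rcases lt_or_ge d (2 * ℓ) with h' | h'
      · rw [if_pos (by omega), if_neg (by omega), if_pos h',
          coeff_eq_zero_of_natDegree_lt (by omega), zero_add]
      · rw [if_pos (by omega), if_neg (by omega), if_neg (by omega),
          coeff_eq_zero_of_natDegree_lt (by omega),
          coeff_eq_zero_of_natDegree_lt (by omega), add_zero]
  rw [apply_ite (fun M : Matrix (Fin ℓ) (Fin ℓ) (ZMod 2) => M x y),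
    apply_ite (fun M : Matrix (Fin ℓ) (Fin ℓ) (ZMod 2) => M x y)]
  simp only [Matrix.circulant_apply, Fin.sub_def, lowerTri, upperTri, Fin.ext_iff,
    Fin.le_def, Fin.lt_def, Fin.add_def, Fin.val_one, Fin.isValue]
  rw [key]
  obtain ⟨c1, c2, c3, c4, c5, c6⟩ := core_aux ℓ i.val j.val x.val y.val hℓ hi hj hx hy
  by_cases hJI : (j : ℕ) = (i : ℕ)
  · rw [if_pos hJI]
    rcases le_or_gt (y : ℕ) (x : ℕ) with hyx | hyx
    · obtain ⟨t1, t2⟩ := c1 hJI hyx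
      rw [if_pos t1, if_pos hyx, t2]
    · have t1 := c2 hJI hyx
      rw [if_neg (by omega), if_neg (by omega), if_neg (by omega)]
  · rw [if_neg hJI]
    by_cases hJ1 : (j : ℕ) = ((i : ℕ) + 1) % 3
    · rw [if_pos hJ1]
      rcases le_or_gt (y : ℕ) (x : ℕ) with hyx | hyx
      · have t1 := c4 hJI hJ1 hyx
        rw [if_neg (by omega), if_neg (by omega), if_neg (by omega)]
      · obtain ⟨t1, t2, t3⟩ := c3 hJI hJ1 hyx
        rw [if_neg (by omega), if_pos t2, if_pos hyx, t3]
    · rw [if_neg hJ1]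
      rcases le_or_gt (y : ℕ) (x : ℕ) with hyx | hyx
      · obtain ⟨t1, t2, t3⟩ := c5 hJI hJ1 hyx
        rw [if_neg (by omega), if_pos t2, t3]
      · obtain ⟨t1, t2⟩ := c6 hJI hJ1 hyx
        rw [if_pos t1, t2]
end
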